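/- arXiv:2007.15851 — 2 statements merged into one kernel-verified Lean document; each statement's English description precedes it below -/
import Mathlib

section
/- Let k > t ≥ 0, n > 2k - t and q be a prime power. The set S of all k-spaces of PG(n,q) that meet a fixed (t+2)-space Γ in at least a (t+1)-space is a maximal family of k-spaces pairwise intersecting in at least a t-space, and |S| = [n-t-2 choose k-t-2]_q + θ_{t+2}·([n-t-1 choose k-t-1]_q − [n-t-2 choose k-t-2]_q). -/
/-- Gaussian binomial coefficient `[n choose k]_q` as a real number,
with the convention that it is `0` for `k < 0` (and for `k > n`). -/
noncomputable def gbin (q n : ℕ) (k : ℤ) : ℝ :=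
  if 0 ≤ k then ∏ i ∈ Finset.range k.toNat, ((q:ℝ)^(n-i) - 1)/((q:ℝ)^(i+1) - 1) else 0

/-- `θ_m = (q^{m+1}-1)/(q-1)`, the number of points of `PG(m,q)`. -/
noncomputable def theta (q m : ℕ) : ℝ := ((q:ℝ)^(m+1) - 1)/((q:ℝ) - 1)

/-!
In vector-space terms a `k`-space is a subspace of dimension `k + 1`, and `Γ` has
dimension `t + 3`. Two members of `S` meet `Γ` in subspaces of dimension `≥ t + 2` inside the
`(t + 3)`-dimensional `Γ`, so they meet each other in dimension `≥ t + 1`.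

For maximality, let `W` meet `Γ` in dimension `≤ t + 1`. Choose a hyperplane `H` of `Γ` with
`dim (H ⊓ W) ≤ t`, and enlarge `H` one vector at a time to a `(k + 1)`-space `U`, taking the new
vector outside `U ⊔ W` as long as possible. Afterwards `U ⊔ W` is the whole space, so
`dim (U ⊓ W) ≤ max t (2 (k + 1) - (n + 1)) = t` because `n > 2k - t`. Then `U ∈ S` and `U`
meets `W` in dimension `≤ t`.

For the count, a member of `S` either contains `Γ` or meets it in exactly one of the `θ_{t+2}`
hyperplanes of `Γ`. The subspaces of dimension `k + 1` through a fixed subspace `X` correspond to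
the subspaces of dimension `k + 1 - dim X` of `V ⧸ X`. These are counted by the Gaussian binomial,
after counting linearly independent tuples in two ways.
-/

open Module Submodule Finset

section GaussianBinomial

theorem prod_range_pow_sub_pow {R : Type*} [CommRing R] (x : R) {m d : ℕ} (hd : d ≤ m) :
    ∏ i ∈ range d, (x ^ m - x ^ i) =
      (∏ i ∈ range d, x ^ i) * ∏ i ∈ range d, (x ^ (m - i) - 1) := by
  rw [← prod_mul_distrib]
  refine prod_congr rfl fun i hi => ?_
  rw [mul_sub, mul_one, ← pow_add, Nat.add_sub_cancel' (by grind)]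

theorem gbin_natCast (q m d : ℕ) :
    gbin q m d = (∏ i ∈ range d, ((q : ℝ) ^ (m - i) - 1)) /
      ∏ i ∈ range d, ((q : ℝ) ^ (i + 1) - 1) := by
  rw [gbin, if_pos (Int.natCast_nonneg d), Int.toNat_natCast, prod_div_distrib]

variable {q : ℕ}

theorem prod_range_pow_succ_sub_one_ne_zero (hq : 1 < q) (d : ℕ) :
    ∏ i ∈ range d, ((q : ℝ) ^ (i + 1) - 1) ≠ 0 :=
  prod_ne_zero_iff.2 fun i _ =>
    sub_ne_zero.2 (one_lt_pow₀ (by exact_mod_cast hq) i.succ_ne_zero).ne'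

theorem gbin_mul_prod_pow_sub (hq : 1 < q) {m d : ℕ} (hd : d ≤ m) :
    gbin q m d * ∏ i ∈ range d, ((q : ℝ) ^ d - q ^ i) =
      ∏ i ∈ range d, ((q : ℝ) ^ m - q ^ i) := by
  have hreflect : ∏ i ∈ range d, ((q : ℝ) ^ (d - i) - 1) =
      ∏ i ∈ range d, ((q : ℝ) ^ (i + 1) - 1) := by
    rw [← prod_range_reflect]
    exact prod_congr rfl fun i hi => by rw [mem_range] at hi; congr 2; omega
  rw [gbin_natCast, prod_range_pow_sub_pow _ le_rfl, prod_range_pow_sub_pow _ hd, hreflect]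
  field_simp [prod_range_pow_succ_sub_one_ne_zero hq d]

theorem gbin_succ_self (hq : 1 < q) (c : ℕ) : gbin q (c + 1) c = theta q c := by
  have hreflect : ∏ i ∈ range c, ((q : ℝ) ^ (c + 1 - i) - 1) =
      ∏ i ∈ range c, ((q : ℝ) ^ (i + 2) - 1) := by
    rw [← prod_range_reflect]
    exact prod_congr rfl fun i hi => by rw [mem_range] at hi; congr 2; omega
  -- `∏ i ∈ range (c + 1), (q ^ (i + 1) - 1)`, split off at either end
  have hsplit := (prod_range_succ' (fun i => (q : ℝ) ^ (i + 1) - 1) c).symm.trans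
    (prod_range_succ (fun i => (q : ℝ) ^ (i + 1) - 1) c)
  have hq1 : (q : ℝ) - 1 ≠ 0 := sub_ne_zero.2 (by exact_mod_cast hq.ne')
  rw [gbin_natCast, theta, hreflect, div_eq_div_iff (prod_range_pow_succ_sub_one_ne_zero hq c) hq1,
    mul_comm ((q : ℝ) ^ (c + 1) - 1)]
  simpa using hsplit

end GaussianBinomial

section Dimension

variable {F V : Type*} [Field F] [AddCommGroup V] [Module F V]

theorem card_le_and_finrank_eq_eq_card_submodule (Γ : Submodule F V) (d : ℕ) :
    Nat.card {H : Submodule F V // H ≤ Γ ∧ finrank F H = d} =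
      Nat.card {H' : Submodule F Γ // finrank F H' = d} :=
  Nat.card_congr
    { toFun H := ⟨H.1.comap Γ.subtype, by
        rw [← finrank_map_subtype_eq, map_comap_subtype, inf_eq_right.2 H.2.1, H.2.2]⟩
      invFun H' :=
        ⟨H'.1.map Γ.subtype, map_subtype_le Γ _, by rw [finrank_map_subtype_eq, H'.2]⟩
      left_inv H := Subtype.ext ((map_comap_subtype Γ H.1).trans (inf_eq_right.2 H.2.1))
      right_inv H' := Subtype.ext (comap_map_eq_of_injective Γ.injective_subtype _) }

variable [FiniteDimensional F V]

theorem finrank_inf_add_finrank_inf_le (Γ W₁ W₂ : Submodule F V) :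
    finrank F ↥(W₁ ⊓ Γ) + finrank F ↥(W₂ ⊓ Γ) ≤
      finrank F Γ + finrank F ↥(W₁ ⊓ W₂) := by
  have hsup : finrank F ↥((W₁ ⊓ Γ) ⊔ (W₂ ⊓ Γ)) ≤ finrank F Γ :=
    finrank_mono (sup_le inf_le_right inf_le_right)
  have hinf : finrank F ↥((W₁ ⊓ Γ) ⊓ (W₂ ⊓ Γ)) ≤ finrank F ↥(W₁ ⊓ W₂) :=
    finrank_mono (inf_le_inf inf_le_left inf_le_left)
  have := finrank_sup_add_finrank_inf_eq (W₁ ⊓ Γ) (W₂ ⊓ Γ)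
  omega

theorem exists_mem_notMem_finrank_sup_inf_le {U A : Submodule F V} (W : Submodule F V)
    (hUA : U < A) :
    ∃ x ∈ A, x ∉ U ∧ finrank F ↥((U ⊔ span F {x}) ⊓ W) ≤
      max (finrank F ↥(U ⊓ W)) (finrank F U + 1 + finrank F W - finrank F ↥(A ⊔ W)) := by
  by_cases hA : A ≤ U ⊔ W
  · obtain ⟨x, hxA, hxU⟩ := SetLike.exists_of_lt hUA
    refine ⟨x, hxA, hxU, le_max_of_le_right ?_⟩
    have hsup : (U ⊔ span F {x}) ⊔ W = A ⊔ W :=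
      le_antisymm (sup_le_sup_right (sup_le hUA.le ((span_singleton_le_iff_mem _ _).2 hxA)) W)
        (sup_le (hA.trans (sup_le_sup_right le_sup_left W)) le_sup_right)
    have := finrank_sup_add_finrank_inf_eq (U ⊔ span F {x}) W
    rw [hsup, finrank_sup_span_singleton hxU] at this
    omega
  · obtain ⟨x, hxA, hxUW⟩ := SetLike.not_le_iff_exists.1 hA
    have hxU : x ∉ U := fun h => hxUW (mem_sup_left h)
    refine ⟨x, hxA, hxU, le_max_of_le_left ?_⟩
    have h₁ := finrank_sup_add_finrank_inf_eq (U ⊔ span F {x}) W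
    have h₂ := finrank_sup_add_finrank_inf_eq U W
    rw [sup_right_comm, finrank_sup_span_singleton hxUW, finrank_sup_span_singleton hxU] at h₁
    omega

theorem exists_le_le_finrank_eq_finrank_inf_le {U₀ A : Submodule F V} (W : Submodule F V)
    (hU₀A : U₀ ≤ A) {d : ℕ} (hU₀d : finrank F U₀ ≤ d) (hdA : d ≤ finrank F A) :
    ∃ U, U₀ ≤ U ∧ U ≤ A ∧ finrank F U = d ∧ finrank F ↥(U ⊓ W) ≤
      max (finrank F ↥(U₀ ⊓ W)) (d + finrank F W - finrank F ↥(A ⊔ W)) := by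
  obtain ⟨j, rfl⟩ := Nat.exists_eq_add_of_le hU₀d
  induction j with
  | zero => exact ⟨U₀, le_rfl, hU₀A, rfl, le_max_left _ _⟩
  | succ j ih =>
    obtain ⟨U, hU₀U, hUA, hU, hUW⟩ := ih (by omega) (by omega)
    have hlt : U < A := lt_of_le_of_ne hUA (by rintro rfl; omega)
    obtain ⟨x, hxA, hxU, hx⟩ := exists_mem_notMem_finrank_sup_inf_le W hlt
    refine ⟨U ⊔ span F {x}, hU₀U.trans le_sup_left,
      sup_le hUA ((span_singleton_le_iff_mem _ _).2 hxA),
      by rw [finrank_sup_span_singleton hxU, hU, add_assoc], hx.trans ?_⟩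
    rw [hU]
    omega

theorem le_finrank_inf_of_forall_le_finrank_inf {k t : ℕ} (ht : t < k)
    (hV : 2 * (k + 1) ≤ finrank F V + t) {Γ W : Submodule F V} (hΓ : finrank F Γ = t + 3)
    (hW : finrank F W = k + 1)
    (hmeet : ∀ U : Submodule F V, finrank F U = k + 1 → t + 2 ≤ finrank F ↥(U ⊓ Γ) →
      t + 1 ≤ finrank F ↥(W ⊓ U)) :
    t + 2 ≤ finrank F ↥(W ⊓ Γ) := by
  by_contra! hWΓ
  obtain ⟨H, -, hHΓ, hH, hHW⟩ :=
    exists_le_le_finrank_eq_finrank_inf_le W (bot_le : ⊥ ≤ Γ) (d := t + 2) (by simp) (by omega)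
  have hΓW := finrank_sup_add_finrank_inf_eq Γ W
  rw [inf_comm] at hΓW
  obtain ⟨U, hHU, -, hU, hUW⟩ :=
    exists_le_le_finrank_eq_finrank_inf_le W (le_top : H ≤ ⊤) (d := k + 1) (by omega)
      (by rw [finrank_top]; omega)
  rw [top_sup_eq, finrank_top, inf_comm] at hUW
  have hUΓ : t + 2 ≤ finrank F ↥(U ⊓ Γ) := hH ▸ finrank_mono (le_inf hHU hHΓ)
  have := hmeet U hU hUΓ
  rw [bot_inf_eq, finrank_bot] at hHW
  omega

theorem finrank_comap_mkQ (X : Submodule F V) (W' : Submodule F (V ⧸ X)) :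
    finrank F ↥(W'.comap X.mkQ) = finrank F W' + finrank F X := by
  have h := LinearMap.finrank_range_add_finrank_ker (X.mkQ.domRestrict (W'.comap X.mkQ))
  rw [LinearMap.range_domRestrict, map_comap_eq_of_surjective X.mkQ_surjective,
    LinearMap.ker_domRestrict, ker_mkQ, (comapSubtypeEquivOfLe (le_comap_mkQ X W')).finrank_eq] at h
  exact h.symm

theorem card_le_and_finrank_eq_eq_card_quotient (X : Submodule F V) (d : ℕ) :
    Nat.card {W : Submodule F V // X ≤ W ∧ finrank F W = d} =
      Nat.card {W' : Submodule F (V ⧸ X) // finrank F W' + finrank F X = d} :=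
  Nat.card_congr
    { toFun W := ⟨W.1.map X.mkQ, by
        rw [← finrank_comap_mkQ, comap_map_mkQ, sup_eq_right.2 W.2.1, W.2.2]⟩
      invFun W' := ⟨W'.1.comap X.mkQ, le_comap_mkQ X _, by rw [finrank_comap_mkQ, W'.2]⟩
      left_inv W := Subtype.ext ((comap_map_mkQ X W.1).trans (sup_eq_right.2 W.2.1))
      right_inv W' := Subtype.ext (map_comap_eq_of_surjective X.mkQ_surjective _) }

theorem inf_eq_iff_le_and_not_le {H Γ : Submodule F V} (hHΓ : H ≤ Γ)
    (hH : finrank F H + 1 = finrank F Γ) (W : Submodule F V) :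
    W ⊓ Γ = H ↔ H ≤ W ∧ ¬Γ ≤ W := by
  constructor
  · rintro rfl
    refine ⟨inf_le_left, fun hΓW => ?_⟩
    rw [inf_eq_right.2 hΓW] at hH
    omega
  · rintro ⟨hHW, hΓW⟩
    have hlt : W ⊓ Γ < Γ := inf_le_right.lt_of_ne (fun h => hΓW (inf_eq_right.1 h))
    have := finrank_lt_finrank_of_lt hlt
    exact (eq_of_le_of_finrank_le (le_inf hHW hHΓ) (by omega)).symm

theorem finrank_inf_eq_of_not_le {Γ W : Submodule F V} {c : ℕ} (hΓ : finrank F Γ = c + 1)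
    (hWΓ : c ≤ finrank F ↥(W ⊓ Γ)) (hΓW : ¬Γ ≤ W) : finrank F ↥(W ⊓ Γ) = c := by
  have := finrank_lt_finrank_of_lt (inf_le_right.lt_of_ne (fun h => hΓW (inf_eq_right.1 h)))
  omega

open scoped Classical in
/-- Double counting: a `W` meeting `Γ` in a hyperplane `H` of `Γ` contains no other hyperplane
of `Γ`, while a `W` containing `Γ` contains all of them. -/
theorem card_finrank_inf_ge_add_card_mul [Fintype (Submodule F V)] {Γ : Submodule F V} {c : ℕ}
    (hΓ : finrank F Γ = c + 1) (d : ℕ) :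
    #{W : Submodule F V | finrank F W = d ∧ c ≤ finrank F ↥(W ⊓ Γ)} +
        #{H : Submodule F V | H ≤ Γ ∧ finrank F H = c} *
          #{W : Submodule F V | Γ ≤ W ∧ finrank F W = d} =
      #{W : Submodule F V | Γ ≤ W ∧ finrank F W = d} +
        ∑ H ∈ {H : Submodule F V | H ≤ Γ ∧ finrank F H = c},
          #{W : Submodule F V | H ≤ W ∧ finrank F W = d} := by
  set S : Finset (Submodule F V) := {W | finrank F W = d ∧ c ≤ finrank F ↥(W ⊓ Γ)}
  set A : Finset (Submodule F V) := {W | Γ ≤ W ∧ finrank F W = d}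
  set ℋ : Finset (Submodule F V) := {H | H ≤ Γ ∧ finrank F H = c}
  have hSA : {W ∈ S | Γ ≤ W} = A := by
    ext W
    simp only [S, A, mem_filter, mem_univ, true_and]
    refine ⟨fun h => ⟨h.2, h.1.1⟩, fun h => ⟨⟨h.2, ?_⟩, h.1⟩⟩
    rw [inf_eq_right.2 h.1, hΓ]
    omega
  have hmaps : (({W ∈ S | ¬Γ ≤ W} : Finset _) : Set _).MapsTo (· ⊓ Γ) ℋ := by
    intro W hW
    simp only [S, ℋ, coe_filter, mem_filter, mem_univ, true_and] at hW ⊢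
    exact ⟨inf_le_right, finrank_inf_eq_of_not_le hΓ hW.1.2 hW.2⟩
  have hfiber : ∀ H ∈ ℋ, #{W ∈ {W ∈ S | ¬Γ ≤ W} | W ⊓ Γ = H} + #A =
      #{W | H ≤ W ∧ finrank F W = d} := by
    intro H hH
    simp only [ℋ, mem_filter, mem_univ, true_and] at hH
    obtain ⟨hHΓ, hH⟩ := hH
    have hiff := inf_eq_iff_le_and_not_le hHΓ (by omega)
    have hB : {W ∈ {W ∈ S | ¬Γ ≤ W} | W ⊓ Γ = H} =
        {W ∈ ({W | H ≤ W ∧ finrank F W = d} : Finset _) | ¬Γ ≤ W} := by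
      ext W
      simp only [S, mem_filter, mem_univ, true_and, hiff]
      constructor
      · rintro ⟨⟨⟨hW, -⟩, -⟩, hHW, hΓW⟩
        exact ⟨⟨hHW, hW⟩, hΓW⟩
      · rintro ⟨⟨hHW, hW⟩, hΓW⟩
        exact ⟨⟨⟨hW, hH ▸ finrank_mono (le_inf hHW hHΓ)⟩, hΓW⟩, hHW, hΓW⟩
    have hA : {W ∈ ({W | H ≤ W ∧ finrank F W = d} : Finset _) | Γ ≤ W} = A := by
      ext W
      simp only [A, mem_filter, mem_univ, true_and]
      exact ⟨fun h => ⟨h.2, h.1.2⟩, fun h => ⟨⟨hHΓ.trans h.1, h.2⟩, h.1⟩⟩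
    rw [hB, ← hA, add_comm, card_filter_add_card_filter_not]
  rw [← card_filter_add_card_filter_not (s := S) (p := fun W => Γ ≤ W), hSA,
    card_eq_sum_card_fiberwise hmaps, ← sum_congr rfl hfiber, sum_add_distrib, sum_const,
    smul_eq_mul]
  ring

end Dimension

section Counting

variable {F V : Type*} [Field F] [Fintype F] [AddCommGroup V] [Module F V] [Finite V]

theorem card_linearIndependent_eq_card_mul (d : ℕ) :
    Nat.card {v : Fin d → V // LinearIndependent F v} =
      Nat.card {W : Submodule F V // finrank F W = d} *
        ∏ i : Fin d, (Fintype.card F ^ d - Fintype.card F ^ (i : ℕ)) := by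
  have : Fintype (Submodule F V) := Fintype.ofFinite _
  let spanOf :
      {v : Fin d → V // LinearIndependent F v} → {W : Submodule F V // finrank F W = d} :=
    fun v => ⟨span F (Set.range v.1), by rw [finrank_span_eq_card v.2, Fintype.card_fin]⟩
  have hfiber (W : {W : Submodule F V // finrank F W = d}) :
      Nat.card {v // spanOf v = W} =
        ∏ i : Fin d, (Fintype.card F ^ d - Fintype.card F ^ (i : ℕ)) := by
    obtain ⟨W, hW⟩ := W
    have hcard := card_linearIndependent (K := F) (V := W) hW.ge
    rw [hW] at hcard
    rw [← hcard]
    exact Nat.card_congr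
      { toFun v := ⟨fun i => ⟨v.1.1 i, (congrArg Subtype.val v.2).le
            (subset_span (Set.mem_range_self i))⟩, LinearIndependent.of_comp W.subtype v.1.2⟩
        invFun u := ⟨⟨W.subtype ∘ u.1, u.2.map' _ W.ker_subtype⟩, Subtype.ext <|
          show span F (Set.range (W.subtype ∘ u.1)) = W by rw [Set.range_comp, span_image,
            u.2.span_eq_top_of_card_eq_finrank' (by rw [Fintype.card_fin, hW]), map_subtype_top]⟩
        left_inv _ := rfl
        right_inv _ := rfl }
  rw [← Nat.card_congr (Equiv.sigmaFiberEquiv spanOf), Nat.card_sigma,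
    sum_congr rfl fun W _ => hfiber W,
    sum_const, card_univ, smul_eq_mul, Nat.card_eq_fintype_card]

theorem card_finrank_eq_gbin {d : ℕ} (hd : d ≤ finrank F V) :
    (Nat.card {W : Submodule F V // finrank F W = d} : ℝ) =
      gbin (Fintype.card F) (finrank F V) d := by
  set q := Fintype.card F
  have hq : 1 < q := Fintype.one_lt_card
  have hcast {m : ℕ} (hm : d ≤ m) : ((∏ i : Fin d, (q ^ m - q ^ (i : ℕ)) : ℕ) : ℝ) =
      ∏ i ∈ range d, ((q : ℝ) ^ m - q ^ i) := by
    rw [Fin.prod_univ_eq_prod_range (fun i => q ^ m - q ^ i), Nat.cast_prod]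
    refine prod_congr rfl fun i hi => ?_
    rw [Nat.cast_sub (Nat.pow_le_pow_right hq.le (by rw [mem_range] at hi; omega)), Nat.cast_pow,
      Nat.cast_pow]
  have hne : ∏ i ∈ range d, ((q : ℝ) ^ d - q ^ i) ≠ 0 := prod_ne_zero_iff.2 fun i hi =>
    sub_ne_zero.2 (pow_lt_pow_right₀ (by exact_mod_cast hq) (mem_range.1 hi)).ne'
  have hcount := congrArg (Nat.cast : ℕ → ℝ)
    ((card_linearIndependent hd).symm.trans (card_linearIndependent_eq_card_mul d))
  rw [Nat.cast_mul, hcast hd, hcast le_rfl, ← gbin_mul_prod_pow_sub hq hd] at hcount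
  exact (mul_right_cancel₀ hne hcount).symm

theorem card_le_and_finrank_eq_gbin (X : Submodule F V) {d : ℕ} (hd : d ≤ finrank F V) :
    (Nat.card {W : Submodule F V // X ≤ W ∧ finrank F W = d} : ℝ) =
      gbin (Fintype.card F) (finrank F V - finrank F X) ((d : ℤ) - finrank F X) := by
  rcases lt_or_ge d (finrank F X) with hlt | hle
  · have : IsEmpty {W : Submodule F V // X ≤ W ∧ finrank F W = d} :=
      ⟨fun W => absurd (finrank_mono W.2.1) (by rw [W.2.2]; omega)⟩
    rw [Nat.card_of_isEmpty, gbin, if_neg (by omega), Nat.cast_zero]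
  · obtain ⟨j, rfl⟩ := Nat.exists_eq_add_of_le hle
    have : Finite (V ⧸ X) := Finite.of_surjective _ X.mkQ_surjective
    have hquot := X.finrank_quotient_add_finrank
    rw [card_le_and_finrank_eq_eq_card_quotient,
      Nat.card_congr (Equiv.subtypeEquivRight
        (q := fun W' : Submodule F (V ⧸ X) => finrank F W' = j) fun W' => by omega),
      card_finrank_eq_gbin (by omega)]
    congr 2 <;> push_cast <;> omega

theorem card_hyperplanes_eq_theta {Γ : Submodule F V} {c : ℕ} (hΓ : finrank F Γ = c + 1) :
    (Nat.card {H : Submodule F V // H ≤ Γ ∧ finrank F H = c} : ℝ) =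
      theta (Fintype.card F) c := by
  rw [card_le_and_finrank_eq_eq_card_submodule, card_finrank_eq_gbin (by omega), hΓ,
    gbin_succ_self Fintype.one_lt_card]

end Counting

theorem stmt_13 (q n k t : ℕ) (F : Type*) [Field F] [Fintype F]
    (hF : Fintype.card F = q) (ht : t < k) (hn : 2*k < n + t)
    (Γ : Submodule F (Fin (n+1) → F)) (hΓ : Module.finrank F Γ = t + 3)
    (S : Set (Submodule F (Fin (n+1) → F)))
    (hS : S = {W : Submodule F (Fin (n+1) → F) | Module.finrank F W = k + 1 ∧ t + 2 ≤ Module.finrank F ↥(W ⊓ Γ)}) :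
    (∀ W1 ∈ S, ∀ W2 ∈ S, t + 1 ≤ Module.finrank F ↥(W1 ⊓ W2)) ∧
    (∀ W : Submodule F (Fin (n+1) → F), Module.finrank F W = k + 1 →
      (∀ U ∈ S, t + 1 ≤ Module.finrank F ↥(W ⊓ U)) → W ∈ S) ∧
    (Nat.card S : ℝ) = gbin q (n-t-2) ((k:ℤ)-t-2) +
      theta q (t+2) * (gbin q (n-t-1) ((k:ℤ)-t-1) - gbin q (n-t-2) ((k:ℤ)-t-2)) := by
  subst hS hF
  have hV : finrank F (Fin (n + 1) → F) = n + 1 := finrank_fin_fun F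
  refine ⟨fun W₁ ⟨_, h₁⟩ W₂ ⟨_, h₂⟩ => ?_, fun W hW hmeet => ⟨hW, ?_⟩, ?_⟩
  · have := finrank_inf_add_finrank_inf_le Γ W₁ W₂
    omega
  · exact le_finrank_inf_of_forall_le_finrank_inf ht (by omega) hΓ hW
      fun U hU hUΓ => hmeet U ⟨hU, hUΓ⟩
  classical
  let _ : Fintype (Submodule F (Fin (n + 1) → F)) := Fintype.ofFinite _
  have hcount := congrArg (Nat.cast : ℕ → ℝ) (card_finrank_inf_ge_add_card_mul hΓ (k + 1))
  simp only [← Fintype.card_subtype, ← Nat.card_eq_fintype_card] at hcount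
  have hA : (Nat.card {W // Γ ≤ W ∧ finrank F W = k + 1} : ℝ) =
      gbin (Fintype.card F) (n - t - 2) ((k : ℤ) - t - 2) := by
    rw [card_le_and_finrank_eq_gbin Γ (by omega), hV, hΓ]
    congr 1 <;> push_cast <;> omega
  have hB : ∀ H ∈ ({H | H ≤ Γ ∧ finrank F H = t + 2} : Finset (Submodule F _)),
      (Nat.card {W // H ≤ W ∧ finrank F W = k + 1} : ℝ) =
        gbin (Fintype.card F) (n - t - 1) ((k : ℤ) - t - 1) := by
    intro H hH
    rw [mem_filter] at hH
    rw [card_le_and_finrank_eq_gbin H (by omega), hV, hH.2.2]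
    congr 1 <;> push_cast <;> omega
  push_cast at hcount
  rw [sum_congr rfl hB, sum_const, nsmul_eq_mul, ← Fintype.card_subtype,
    ← Nat.card_eq_fintype_card, card_hyperplanes_eq_theta hΓ, hA] at hcount
  change (Nat.card {W : Submodule F (Fin (n + 1) → F) //
    finrank F W = k + 1 ∧ t + 2 ≤ finrank F ↥(W ⊓ Γ)} : ℝ) = _
  linear_combination hcount
end

section
/- For integers n > 2k + t + 2, k > 2t + 2, t > 0, q ≥ 3 and 2 ≤ x ≤ k − t + 1: θ_{k+1} + Σ_{j=0}^{k-t-2} [k-t+1 choose j+1]_q · q^{(k-t-j)(k-t-j-1)} · [n-k-1 choose k-t-j-1]_q > θ_{t+x}·[n-t-x+1 choose k-t-x+1]_q + (θ_{k-t})^2·[n-t-2 choose k-t-2]_q + θ_{k-t-1}·[n-t-1 choose k-t-1]_q. -/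
set_option maxHeartbeats 1000000


lemma W_aux (e : ℝ) (h0 : 0 ≤ e) (h1 : e ≤ 1/2) :
    ∀ b r : ℕ, b ≤ r → 1 - 2 * e ^ (r - b + 1) ≤ ∏ i ∈ Finset.range b, (1 - e ^ (r - i)) := by
  intro b
  induction b with
  | zero =>
    intro r _
    simp only [Finset.range_zero, Finset.prod_empty, Nat.sub_zero]
    nlinarith [pow_nonneg h0 (r + 1)]
  | succ m ih =>
    intro r hr
    rw [Finset.prod_range_succ]
    have hmr : m ≤ r := by omega
    have ih' := ih r hmr
    have hu0 : 0 ≤ e ^ (r - m) := pow_nonneg h0 _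
    have hue : e ^ (r - m) ≤ e ^ 1 := pow_le_pow_of_le_one h0 (by linarith) (by omega)
    rw [pow_one] at hue
    have h3 : r - (m+1) + 1 = r - m := by omega
    rw [h3]
    have hstep : (1 - 2 * e ^ (r - m + 1)) * (1 - e ^ (r - m)) ≤
        (∏ i ∈ Finset.range m, (1 - e ^ (r - i))) * (1 - e ^ (r - m)) :=
      mul_le_mul_of_nonneg_right ih' (by nlinarith)
    have hexp : e ^ (r - m + 1) = e ^ (r - m) * e := pow_succ e (r - m)
    nlinarith [hstep, hu0, hue, mul_nonneg hu0 (by linarith : (0:ℝ) ≤ 1 - 2*e),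
      mul_nonneg (mul_nonneg hu0 hu0) h0]

lemma W_denom (e : ℝ) (h0 : 0 ≤ e) (h1 : e ≤ 1/2) (b : ℕ) :
    1 - 2 * e ≤ ∏ i ∈ Finset.range b, (1 - e ^ (i + 1)) := by
  have h2 := Finset.prod_range_reflect (fun j => 1 - e ^ (j + 1)) b
  rw [← h2]
  have h3 : ∀ j ∈ Finset.range b, (fun j => 1 - e ^ (j + 1)) (b - 1 - j) = 1 - e ^ (b - j) := by
    intro j hj
    rw [Finset.mem_range] at hj
    simp only
    congr 2
    omega
  rw [Finset.prod_congr rfl h3]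
  have h4 := W_aux e h0 h1 b b le_rfl
  simpa using h4

lemma sum_range_sub_eq (a b : ℕ) (h : b ≤ a) :
    ∑ i ∈ Finset.range b, (a - i) = b * (a - b) + ∑ i ∈ Finset.range b, (i + 1) := by
  induction b with
  | zero => simp
  | succ m ih =>
    rw [Finset.sum_range_succ, Finset.sum_range_succ, ih (by omega)]
    obtain ⟨c, rfl⟩ : ∃ c, a = m + 1 + c := ⟨a - (m+1), by omega⟩
    have h1 : m + 1 + c - m = c + 1 := by omega
    have h2 : m + 1 + c - (m + 1) = c := by omega
    rw [h1, h2]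
    ring

lemma prod_sub_one_eq (Q : ℝ) (hQ : 0 < Q) (b : ℕ) (f : ℕ → ℕ) :
    ∏ i ∈ Finset.range b, (Q ^ (f i) - 1)
      = (∏ i ∈ Finset.range b, Q ^ (f i)) * ∏ i ∈ Finset.range b, (1 - (Q⁻¹) ^ (f i)) := by
  rw [← Finset.prod_mul_distrib]
  apply Finset.prod_congr rfl
  intro i _
  rw [mul_sub, mul_one, ← mul_pow, mul_inv_cancel₀ (ne_of_gt hQ), one_pow]

lemma gbin_coe (q a b : ℕ) :
    gbin q a (b : ℤ) = ∏ i ∈ Finset.range b, ((q:ℝ)^(a-i) - 1)/((q:ℝ)^(i+1) - 1) := by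
  simp [gbin]

lemma gbin_nonneg (q a : ℕ) (b : ℤ) (hq : 1 ≤ q) : 0 ≤ gbin q a b := by
  have h1 : (1:ℝ) ≤ (q:ℝ) := by exact_mod_cast hq
  unfold gbin
  split
  · apply Finset.prod_nonneg
    intro i _
    apply div_nonneg
    · have : (1:ℝ) ≤ (q:ℝ)^(a-i) := by
        calc (1:ℝ) = 1^(a-i) := (one_pow _).symm
        _ ≤ (q:ℝ)^(a-i) := pow_le_pow_left₀ zero_le_one h1 _
      linarith
    · have : (1:ℝ) ≤ (q:ℝ)^(i+1) := by
        calc (1:ℝ) = 1^(i+1) := (one_pow _).symm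
        _ ≤ (q:ℝ)^(i+1) := pow_le_pow_left₀ zero_le_one h1 _
      linarith
  · exact le_refl _

lemma gbin_pos (q a b : ℕ) (hq : 2 ≤ q) (hba : b ≤ a) : 0 < gbin q a (b:ℤ) := by
  have h2 : (2:ℝ) ≤ (q:ℝ) := by exact_mod_cast hq
  rw [gbin_coe]
  apply Finset.prod_pos
  intro i hi
  rw [Finset.mem_range] at hi
  apply div_pos
  · have : (q:ℝ) ≤ (q:ℝ)^(a-i) := le_self_pow₀ (by linarith) (by omega)
    linarith
  · have : (q:ℝ) ≤ (q:ℝ)^(i+1) := le_self_pow₀ (by linarith) (by omega)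
    linarith

lemma gbin_one (q s : ℕ) : gbin q (s+1) 1 = theta q s := by
  rw [show (1:ℤ) = ((1:ℕ):ℤ) by norm_num, gbin_coe]
  simp [theta]

lemma gbin_le (q a b : ℕ) (hq : 3 ≤ q) (hba : b ≤ a) :
    gbin q a (b:ℤ) ≤ 3 * (q:ℝ) ^ (b * (a - b)) := by
  have hQ3 : (3:ℝ) ≤ (q:ℝ) := by exact_mod_cast hq
  have hQ0 : (0:ℝ) < (q:ℝ) := by linarith
  have he0 : (0:ℝ) ≤ (q:ℝ)⁻¹ := by positivity
  have he1 : (q:ℝ)⁻¹ ≤ 1/3 := by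
    rw [show (1:ℝ)/3 = (3:ℝ)⁻¹ by norm_num]
    exact inv_anti₀ (by norm_num) hQ3
  rw [gbin_coe, Finset.prod_div_distrib]
  have hDpos : 0 < ∏ i ∈ Finset.range b, ((q:ℝ)^(i+1) - 1) := by
    apply Finset.prod_pos
    intro i _
    have : (q:ℝ) ≤ (q:ℝ)^(i+1) := le_self_pow₀ (by linarith) (by omega)
    linarith
  rw [div_le_iff₀ hDpos]
  have hN : ∏ i ∈ Finset.range b, ((q:ℝ)^(a-i) - 1) ≤ (q:ℝ) ^ (∑ i ∈ Finset.range b, (a - i)) := by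
    rw [← Finset.prod_pow_eq_pow_sum]
    apply Finset.prod_le_prod
    · intro i _
      have : (1:ℝ) ≤ (q:ℝ)^(a-i) := one_le_pow₀ (by linarith)
      linarith
    · intro i _
      linarith [pow_pos hQ0 (a-i)]
  have hsum : (∑ i ∈ Finset.range b, (a - i)) = b*(a-b) + ∑ i ∈ Finset.range b, (i+1) :=
    sum_range_sub_eq a b hba
  have hD2 : (q:ℝ)^(∑ i ∈ Finset.range b, (i+1)) * (1/3)
      ≤ ∏ i ∈ Finset.range b, ((q:ℝ)^(i+1) - 1) := by
    rw [prod_sub_one_eq (q:ℝ) hQ0 b (fun i => i+1), Finset.prod_pow_eq_pow_sum]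
    apply mul_le_mul_of_nonneg_left _ (pow_nonneg (le_of_lt hQ0) _)
    have := W_denom ((q:ℝ)⁻¹) he0 (by linarith) b
    linarith
  calc ∏ i ∈ Finset.range b, ((q:ℝ)^(a-i) - 1)
      ≤ (q:ℝ) ^ (∑ i ∈ Finset.range b, (a - i)) := hN
    _ = (q:ℝ)^(b*(a-b)) * (q:ℝ)^(∑ i ∈ Finset.range b, (i+1)) := by rw [hsum, pow_add]
    _ ≤ 3 * (q:ℝ)^(b*(a-b)) * ∏ i ∈ Finset.range b, ((q:ℝ)^(i+1) - 1) := by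
        nlinarith [mul_le_mul_of_nonneg_left hD2
          (show (0:ℝ) ≤ 3*(q:ℝ)^(b*(a-b)) by positivity)]

lemma gbin_ge (q a b : ℕ) (hq : 3 ≤ q) (hba : b ≤ a) :
    1/3 * (q:ℝ) ^ (b * (a - b)) ≤ gbin q a (b:ℤ) := by
  have hQ3 : (3:ℝ) ≤ (q:ℝ) := by exact_mod_cast hq
  have hQ0 : (0:ℝ) < (q:ℝ) := by linarith
  have he0 : (0:ℝ) ≤ (q:ℝ)⁻¹ := by positivity
  have he1 : (q:ℝ)⁻¹ ≤ 1/3 := by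
    rw [show (1:ℝ)/3 = (3:ℝ)⁻¹ by norm_num]
    exact inv_anti₀ (by norm_num) hQ3
  rw [gbin_coe, Finset.prod_div_distrib]
  have hDpos : 0 < ∏ i ∈ Finset.range b, ((q:ℝ)^(i+1) - 1) := by
    apply Finset.prod_pos
    intro i _
    have : (q:ℝ) ≤ (q:ℝ)^(i+1) := le_self_pow₀ (by linarith) (by omega)
    linarith
  rw [le_div_iff₀ hDpos]
  have hsum : (∑ i ∈ Finset.range b, (a - i)) = b*(a-b) + ∑ i ∈ Finset.range b, (i+1) :=
    sum_range_sub_eq a b hba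
  have hNge : (q:ℝ)^(∑ i ∈ Finset.range b, (a-i)) * (1/3)
      ≤ ∏ i ∈ Finset.range b, ((q:ℝ)^(a-i) - 1) := by
    rw [prod_sub_one_eq (q:ℝ) hQ0 b (fun i => a-i), Finset.prod_pow_eq_pow_sum]
    apply mul_le_mul_of_nonneg_left _ (pow_nonneg (le_of_lt hQ0) _)
    have h := W_aux ((q:ℝ)⁻¹) he0 (by linarith) b a hba
    have h2 : ((q:ℝ)⁻¹)^(a-b+1) ≤ (q:ℝ)⁻¹ := by
      calc ((q:ℝ)⁻¹)^(a-b+1) ≤ ((q:ℝ)⁻¹)^1 := pow_le_pow_of_le_one he0 (by linarith) (by omega)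
      _ = (q:ℝ)⁻¹ := pow_one _
    linarith
  have hDle : ∏ i ∈ Finset.range b, ((q:ℝ)^(i+1) - 1) ≤ (q:ℝ)^(∑ i ∈ Finset.range b, (i+1)) := by
    rw [← Finset.prod_pow_eq_pow_sum]
    apply Finset.prod_le_prod
    · intro i _
      have : (1:ℝ) ≤ (q:ℝ)^(i+1) := one_le_pow₀ (by linarith)
      linarith
    · intro i _
      linarith [pow_pos hQ0 (i+1)]
  calc 1/3 * (q:ℝ)^(b*(a-b)) * ∏ i ∈ Finset.range b, ((q:ℝ)^(i+1) - 1)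
      ≤ 1/3 * (q:ℝ)^(b*(a-b)) * (q:ℝ)^(∑ i ∈ Finset.range b, (i+1)) := by
        apply mul_le_mul_of_nonneg_left hDle (by positivity)
    _ = (q:ℝ)^(∑ i ∈ Finset.range b, (a-i)) * (1/3) := by rw [hsum, pow_add]; ring
    _ ≤ ∏ i ∈ Finset.range b, ((q:ℝ)^(a-i) - 1) := hNge

lemma gbin_shift (q a b c : ℕ) (hq : 3 ≤ q) (h6 : b + 5 ≤ a) :
    gbin q (a + c) (b:ℤ) ≤ 729/727 * (q:ℝ)^(b*c) * gbin q a (b:ℤ) := by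
  have hQ3 : (3:ℝ) ≤ (q:ℝ) := by exact_mod_cast hq
  have hQ0 : (0:ℝ) < (q:ℝ) := by linarith
  have he0 : (0:ℝ) ≤ (q:ℝ)⁻¹ := by positivity
  have he1 : (q:ℝ)⁻¹ ≤ 1/3 := by
    rw [show (1:ℝ)/3 = (3:ℝ)⁻¹ by norm_num]
    exact inv_anti₀ (by norm_num) hQ3
  rw [gbin_coe, gbin_coe, Finset.prod_div_distrib, Finset.prod_div_distrib]
  have hDpos : 0 < ∏ i ∈ Finset.range b, ((q:ℝ)^(i+1) - 1) := by
    apply Finset.prod_pos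
    intro i _
    have : (q:ℝ) ≤ (q:ℝ)^(i+1) := le_self_pow₀ (by linarith) (by omega)
    linarith
  have hsd : ∑ i ∈ Finset.range b, (a+c-i) = b*c + ∑ i ∈ Finset.range b, (a-i) := by
    have hcongr : ∀ i ∈ Finset.range b, a+c-i = c + (a-i) := by
      intro i hi; rw [Finset.mem_range] at hi; omega
    rw [Finset.sum_congr rfl hcongr, Finset.sum_add_distrib, Finset.sum_const,
      Finset.card_range, smul_eq_mul]
  have hN' : ∏ i ∈ Finset.range b, ((q:ℝ)^(a+c-i) - 1)
      ≤ (q:ℝ)^(b*c) * (q:ℝ)^(∑ i ∈ Finset.range b, (a-i)) := by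
    rw [← pow_add, ← hsd, ← Finset.prod_pow_eq_pow_sum]
    apply Finset.prod_le_prod
    · intro i _
      have : (1:ℝ) ≤ (q:ℝ)^(a+c-i) := one_le_pow₀ (by linarith)
      linarith
    · intro i _
      linarith [pow_pos hQ0 (a+c-i)]
  have hNge : (q:ℝ)^(∑ i ∈ Finset.range b, (a-i)) * (727/729)
      ≤ ∏ i ∈ Finset.range b, ((q:ℝ)^(a-i) - 1) := by
    rw [prod_sub_one_eq (q:ℝ) hQ0 b (fun i => a-i), Finset.prod_pow_eq_pow_sum]
    apply mul_le_mul_of_nonneg_left _ (pow_nonneg (le_of_lt hQ0) _)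
    have h := W_aux ((q:ℝ)⁻¹) he0 (by linarith) b a (by omega)
    have h2 : ((q:ℝ)⁻¹)^(a-b+1) ≤ ((q:ℝ)⁻¹)^6 := pow_le_pow_of_le_one he0 (by linarith) (by omega)
    have h3 : ((q:ℝ)⁻¹)^6 ≤ ((1:ℝ)/3)^6 := pow_le_pow_left₀ he0 he1 6
    have h4 : ((1:ℝ)/3)^6 = 1/729 := by norm_num
    linarith
  have key : ∏ i ∈ Finset.range b, ((q:ℝ)^(a+c-i) - 1)
      ≤ 729/727 * (q:ℝ)^(b*c) * ∏ i ∈ Finset.range b, ((q:ℝ)^(a-i) - 1) := by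
    have hc : (0:ℝ) ≤ (q:ℝ)^(b*c) := by positivity
    nlinarith [hN', hNge, mul_le_mul_of_nonneg_left hNge (show (0:ℝ) ≤ 729/727*(q:ℝ)^(b*c) by positivity)]
  calc (∏ i ∈ Finset.range b, ((q:ℝ)^(a+c-i) - 1)) / ∏ i ∈ Finset.range b, ((q:ℝ)^(i+1) - 1)
      ≤ (729/727 * (q:ℝ)^(b*c) * ∏ i ∈ Finset.range b, ((q:ℝ)^(a-i) - 1))
          / ∏ i ∈ Finset.range b, ((q:ℝ)^(i+1) - 1) := by
        exact (div_le_div_iff_of_pos_right hDpos).mpr key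
    _ = 729/727 * (q:ℝ)^(b*c) *
        ((∏ i ∈ Finset.range b, ((q:ℝ)^(a-i) - 1)) / ∏ i ∈ Finset.range b, ((q:ℝ)^(i+1) - 1)) := by
        rw [mul_div_assoc]

lemma theta_pos (q s : ℕ) (hq : 2 ≤ q) : 0 < theta q s := by
  have h1 : (2:ℝ) ≤ (q:ℝ) := by exact_mod_cast hq
  unfold theta
  apply div_pos
  · have : (q:ℝ) ≤ (q:ℝ)^(s+1) := le_self_pow₀ (by linarith) (by omega)
    linarith
  · linarith

lemma theta_ge (q s : ℕ) (hq : 2 ≤ q) : (q:ℝ)^s ≤ theta q s := by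
  have h1 : (2:ℝ) ≤ (q:ℝ) := by exact_mod_cast hq
  unfold theta
  rw [le_div_iff₀ (by linarith : (0:ℝ) < (q:ℝ) - 1)]
  have hps : (q:ℝ)^(s+1) = (q:ℝ)^s * q := pow_succ _ _
  have h1s : (1:ℝ) ≤ (q:ℝ)^s := one_le_pow₀ (by linarith)
  nlinarith

lemma theta_le (q s : ℕ) (hq : 3 ≤ q) : theta q s ≤ 3/2 * (q:ℝ)^s := by
  have h1 : (3:ℝ) ≤ (q:ℝ) := by exact_mod_cast hq
  unfold theta
  rw [div_le_iff₀ (by linarith : (0:ℝ) < (q:ℝ) - 1)]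
  have hps : (q:ℝ)^(s+1) = (q:ℝ)^s * q := pow_succ _ _
  have h1s : (1:ℝ) ≤ (q:ℝ)^s := one_le_pow₀ (by linarith)
  nlinarith

lemma theta_mono (q : ℕ) (hq : 2 ≤ q) {s s' : ℕ} (h : s ≤ s') : theta q s ≤ theta q s' := by
  have h1 : (2:ℝ) ≤ (q:ℝ) := by exact_mod_cast hq
  unfold theta
  have h2 : (q:ℝ)^(s+1) ≤ (q:ℝ)^(s'+1) := pow_le_pow_right₀ (by linarith) (by omega)
  exact (div_le_div_iff_of_pos_right (by linarith)).mpr (by linarith)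

lemma theta_mul_q_le (q s : ℕ) (hq : 2 ≤ q) : (q:ℝ) * theta q s ≤ theta q (s+1) := by
  have h1 : (2:ℝ) ≤ (q:ℝ) := by exact_mod_cast hq
  unfold theta
  rw [mul_div_assoc']
  have h2 : (q:ℝ)^(s+1+1) = (q:ℝ)^(s+1) * q := pow_succ _ _
  have h3 : (1:ℝ) ≤ (q:ℝ)^(s+1) := one_le_pow₀ (by linarith)
  exact (div_le_div_iff_of_pos_right (by linarith)).mpr (by nlinarith)

theorem stmt_18 (q n k t x : ℕ) (hn : 2*k + t + 2 < n) (hk : 2*t + 2 < k) (ht : 0 < t)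
    (hq : 3 ≤ q) (hx1 : 2 ≤ x) (hx2 : x ≤ k - t + 1) :
    theta q (t+x) * gbin q (n-t-x+1) ((k:ℤ)-t-x+1) +
      (theta q (k-t))^2 * gbin q (n-t-2) ((k:ℤ)-t-2) +
      theta q (k-t-1) * gbin q (n-t-1) ((k:ℤ)-t-1)
    < theta q (k+1) + ∑ j ∈ Finset.range (k-t-1),
        gbin q (k-t+1) ((j:ℤ)+1) * (q:ℝ)^((k-t-j)*(k-t-j-1)) *
          gbin q (n-k-1) ((k:ℤ)-t-j-1) := by
  have hq1 : 1 ≤ q := by omega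
  have hq2 : 2 ≤ q := by omega
  have hQ3 : (3:ℝ) ≤ (q:ℝ) := by exact_mod_cast hq
  have hQ0 : (0:ℝ) < (q:ℝ) := by linarith
  have hQ1 : (1:ℝ) ≤ (q:ℝ) := by linarith
  rw [show (k:ℤ) - t - x + 1 = ((k-t+1-x : ℕ):ℤ) by omega,
      show (k:ℤ) - t - 2 = ((k-t-2 : ℕ):ℤ) by omega,
      show (k:ℤ) - t - 1 = ((k-t-1 : ℕ):ℤ) by omega]
  -- the j = 0 term of the sum
  have hsum : theta q (k-t) * (q:ℝ)^((k-t)*(k-t-1)) * gbin q (n-k-1) ((k-t-1:ℕ):ℤ)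
      ≤ ∑ j ∈ Finset.range (k-t-1),
        gbin q (k-t+1) ((j:ℤ)+1) * (q:ℝ)^((k-t-j)*(k-t-j-1)) *
          gbin q (n-k-1) ((k:ℤ)-t-j-1) := by
    have h0mem : (0:ℕ) ∈ Finset.range (k-t-1) := by
      rw [Finset.mem_range]; omega
    have hle := Finset.single_le_sum
      (f := fun j : ℕ => gbin q (k-t+1) ((j:ℤ)+1) * (q:ℝ)^((k-t-j)*(k-t-j-1)) *
          gbin q (n-k-1) ((k:ℤ)-t-j-1))
      (fun j _ => mul_nonneg (mul_nonneg (gbin_nonneg _ _ _ hq1) (by positivity))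
        (gbin_nonneg _ _ _ hq1)) h0mem
    simp only [Nat.cast_zero, zero_add, Nat.sub_zero, sub_zero] at hle
    rwa [show ((k:ℤ) - t - 1) = ((k-t-1:ℕ):ℤ) by omega, gbin_one] at hle
  -- positivity facts
  have hPpos : 0 < gbin q (n-k-1) ((k-t-1:ℕ):ℤ) := gbin_pos q (n-k-1) (k-t-1) hq2 (by omega)
  have hPnn : (0:ℝ) ≤ gbin q (n-k-1) ((k-t-1:ℕ):ℤ) := hPpos.le
  have hTpos : 0 < theta q (k-t) * (q:ℝ)^((k-t)*(k-t-1)) * gbin q (n-k-1) ((k-t-1:ℕ):ℤ) :=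
    mul_pos (mul_pos (theta_pos q _ hq2) (by positivity)) hPpos
  -- lower bound for the j = 0 term: q^e0 ≤ 3*T
  have hPge := gbin_ge q (n-k-1) (k-t-1) hq (by omega)
  have hθge := theta_ge q (k-t) hq2
  have hT3 : (q:ℝ)^((k-t) + ((k-t)*(k-t-1) + (k-t-1)*((n-k-1)-(k-t-1))))
      ≤ 3 * (theta q (k-t) * (q:ℝ)^((k-t)*(k-t-1)) * gbin q (n-k-1) ((k-t-1:ℕ):ℤ)) := by
    have h1 : (q:ℝ)^(k-t) * (q:ℝ)^((k-t)*(k-t-1)) * (1/3 * (q:ℝ)^((k-t-1)*((n-k-1)-(k-t-1))))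
        ≤ theta q (k-t) * (q:ℝ)^((k-t)*(k-t-1)) * gbin q (n-k-1) ((k-t-1:ℕ):ℤ) := by
      apply mul_le_mul (mul_le_mul_of_nonneg_right hθge (by positivity)) hPge
        (by positivity) (mul_nonneg (theta_pos q _ hq2).le (by positivity))
    calc (q:ℝ)^((k-t) + ((k-t)*(k-t-1) + (k-t-1)*((n-k-1)-(k-t-1))))
        = 3 * ((q:ℝ)^(k-t) * (q:ℝ)^((k-t)*(k-t-1)) * (1/3 * (q:ℝ)^((k-t-1)*((n-k-1)-(k-t-1))))) := by
          rw [pow_add, pow_add]; ring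
      _ ≤ 3 * (theta q (k-t) * (q:ℝ)^((k-t)*(k-t-1)) * gbin q (n-k-1) ((k-t-1:ℕ):ℤ)) := by
          linarith
  -- bound for the C term
  have hshift := gbin_shift q (n-k-1) (k-t-1) (k-t) hq (by omega)
  rw [show (n-k-1)+(k-t) = n-t-1 by omega] at hshift
  have hθq : (q:ℝ) * theta q (k-t-1) ≤ theta q (k-t) := by
    have h := theta_mul_q_le q (k-t-1) hq2
    rwa [show k-t-1+1 = k-t by omega] at h
  have hθnn : 0 ≤ theta q (k-t-1) := (theta_pos q _ hq2).le
  have hC : theta q (k-t-1) * gbin q (n-t-1) ((k-t-1:ℕ):ℤ)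
      ≤ 243/727 * (theta q (k-t) * (q:ℝ)^((k-t)*(k-t-1)) * gbin q (n-k-1) ((k-t-1:ℕ):ℤ)) := by
    have h1 : theta q (k-t-1) * gbin q (n-t-1) ((k-t-1:ℕ):ℤ)
        ≤ theta q (k-t-1) * (729/727 * (q:ℝ)^((k-t-1)*(k-t)) * gbin q (n-k-1) ((k-t-1:ℕ):ℤ)) :=
      mul_le_mul_of_nonneg_left hshift hθnn
    have h3 : (k-t-1)*(k-t) = (k-t)*(k-t-1) := Nat.mul_comm _ _
    rw [h3] at h1
    have h2 : (3:ℝ) * theta q (k-t-1) ≤ theta q (k-t) := by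
      nlinarith [mul_nonneg (sub_nonneg.mpr hQ3) hθnn]
    have hpw : (0:ℝ) ≤ (q:ℝ)^((k-t)*(k-t-1)) * gbin q (n-k-1) ((k-t-1:ℕ):ℤ) :=
      mul_nonneg (by positivity) hPnn
    nlinarith [h1, mul_nonneg (by linarith : (0:ℝ) ≤ theta q (k-t) - 3*theta q (k-t-1)) hpw]
  -- bound for the A term
  have hA : theta q (t+x) * gbin q (n-t-x+1) ((k-t+1-x:ℕ):ℤ)
      ≤ 243/727 * (theta q (k-t) * (q:ℝ)^((k-t)*(k-t-1)) * gbin q (n-k-1) ((k-t-1:ℕ):ℤ)) := by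
    rcases lt_or_ge x 3 with hx3 | hx3
    · -- x = 2
      rw [show n-t-x+1 = n-t-1 by omega, show k-t+1-x = k-t-1 by omega]
      exact le_trans (mul_le_mul_of_nonneg_right
        (theta_mono q hq2 (show t+x ≤ k-t-1 by omega)) (gbin_nonneg _ _ _ hq1)) hC
    · -- x ≥ 3
      have hgb := gbin_le q (n-t-x+1) (k-t+1-x) hq (by omega)
      have hth := theta_le q (t+x) hq
      have h1 : theta q (t+x) * gbin q (n-t-x+1) ((k-t+1-x:ℕ):ℤ)
          ≤ (3/2*(q:ℝ)^(t+x)) * (3*(q:ℝ)^((k-t+1-x)*((n-t-x+1)-(k-t+1-x)))) :=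
        mul_le_mul hth hgb (gbin_nonneg _ _ _ hq1) (by positivity)
      have h2 : (3/2*(q:ℝ)^(t+x)) * (3*(q:ℝ)^((k-t+1-x)*((n-t-x+1)-(k-t+1-x))))
          = 9/2 * (q:ℝ)^((t+x) + (k-t+1-x)*((n-t-x+1)-(k-t+1-x))) := by
        rw [pow_add]; ring
      have hEA : (t+x) + (k-t+1-x)*((n-t-x+1)-(k-t+1-x)) + 7
          ≤ (k-t) + ((k-t)*(k-t-1) + (k-t-1)*((n-k-1)-(k-t-1))) := by
        zify [show t ≤ k by omega, show t ≤ n by omega, show x ≤ n - t by omega,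
          hx2, show k - t + 1 - x ≤ n - t - x + 1 by omega,
          show 1 ≤ k - t by omega, show k ≤ n by omega, show 1 ≤ n - k by omega,
          show k - t - 1 ≤ n - k - 1 by omega]
        have Hn : (2:ℤ)*k + t + 3 ≤ (n:ℤ) := by omega
        have Hk : (2:ℤ)*t + 3 ≤ (k:ℤ) := by omega
        have Ht : (1:ℤ) ≤ (t:ℤ) := by omega
        have Hx3 : (3:ℤ) ≤ (x:ℤ) := by omega
        have Hx : (x:ℤ) ≤ (k:ℤ) - t + 1 := by omega
        nlinarith [mul_nonneg (by omega : (0:ℤ) ≤ (x:ℤ) - 3) (by omega : (0:ℤ) ≤ (n:ℤ) - k)]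
      have h5 : (q:ℝ)^((t+x) + (k-t+1-x)*((n-t-x+1)-(k-t+1-x))) * (q:ℝ)^7
          ≤ (q:ℝ)^((k-t) + ((k-t)*(k-t-1) + (k-t-1)*((n-k-1)-(k-t-1)))) := by
        rw [← pow_add]; exact pow_le_pow_right₀ hQ1 hEA
      have hq7 : (2187:ℝ) ≤ (q:ℝ)^7 := by
        calc (2187:ℝ) = 3^7 := by norm_num
        _ ≤ (q:ℝ)^7 := pow_le_pow_left₀ (by norm_num) hQ3 7
      have hy : (0:ℝ) ≤ (q:ℝ)^((t+x) + (k-t+1-x)*((n-t-x+1)-(k-t+1-x))) := by positivity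
      have h6 : 2187 * (q:ℝ)^((t+x) + (k-t+1-x)*((n-t-x+1)-(k-t+1-x)))
          ≤ (q:ℝ)^((t+x) + (k-t+1-x)*((n-t-x+1)-(k-t+1-x))) * (q:ℝ)^7 := by
        nlinarith [mul_le_mul_of_nonneg_left hq7 hy]
      linarith [h1, h2.le, h2.ge, h5, hT3, hTpos, h6]
  -- bound for the B term
  have hB : (theta q (k-t))^2 * gbin q (n-t-2) ((k-t-2:ℕ):ℤ)
      ≤ 1/12 * (theta q (k-t) * (q:ℝ)^((k-t)*(k-t-1)) * gbin q (n-k-1) ((k-t-1:ℕ):ℤ)) := by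
    have hgb := gbin_le q (n-t-2) (k-t-2) hq (by omega)
    have hth := theta_le q (k-t) hq
    have h1 : (theta q (k-t))^2 * gbin q (n-t-2) ((k-t-2:ℕ):ℤ)
        ≤ (3/2*(q:ℝ)^(k-t))^2 * (3*(q:ℝ)^((k-t-2)*((n-t-2)-(k-t-2)))) :=
      mul_le_mul (pow_le_pow_left₀ (theta_pos q (k-t) hq2).le hth 2) hgb
        (gbin_nonneg _ _ _ hq1) (by positivity)
    have h2 : (3/2*(q:ℝ)^(k-t))^2 * (3*(q:ℝ)^((k-t-2)*((n-t-2)-(k-t-2))))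
        = 27/4 * (q:ℝ)^((k-t) + ((k-t) + (k-t-2)*((n-t-2)-(k-t-2)))) := by
      rw [pow_add, pow_add]; ring
    have hEB : (k-t) + ((k-t) + (k-t-2)*((n-t-2)-(k-t-2))) + 5
        ≤ (k-t) + ((k-t)*(k-t-1) + (k-t-1)*((n-k-1)-(k-t-1))) := by
      zify [show t ≤ k by omega, show t ≤ n by omega, show 2 ≤ k - t by omega,
        show 2 ≤ n - t by omega, show k - t - 2 ≤ n - t - 2 by omega,
        show 1 ≤ k - t by omega, show k ≤ n by omega, show 1 ≤ n - k by omega,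
        show k - t - 1 ≤ n - k - 1 by omega]
      have Hn : (2:ℤ)*k + t + 3 ≤ (n:ℤ) := by omega
      have Hk : (2:ℤ)*t + 3 ≤ (k:ℤ) := by omega
      have Ht : (1:ℤ) ≤ (t:ℤ) := by omega
      nlinarith []
    have h5 : (q:ℝ)^((k-t) + ((k-t) + (k-t-2)*((n-t-2)-(k-t-2)))) * (q:ℝ)^5
        ≤ (q:ℝ)^((k-t) + ((k-t)*(k-t-1) + (k-t-1)*((n-k-1)-(k-t-1)))) := by
      rw [← pow_add]; exact pow_le_pow_right₀ hQ1 hEB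
    have hq5 : (243:ℝ) ≤ (q:ℝ)^5 := by
      calc (243:ℝ) = 3^5 := by norm_num
      _ ≤ (q:ℝ)^5 := pow_le_pow_left₀ (by norm_num) hQ3 5
    have hy : (0:ℝ) ≤ (q:ℝ)^((k-t) + ((k-t) + (k-t-2)*((n-t-2)-(k-t-2)))) := by positivity
    have h6 : 243 * (q:ℝ)^((k-t) + ((k-t) + (k-t-2)*((n-t-2)-(k-t-2))))
        ≤ (q:ℝ)^((k-t) + ((k-t) + (k-t-2)*((n-t-2)-(k-t-2)))) * (q:ℝ)^5 := by
      nlinarith [mul_le_mul_of_nonneg_left hq5 hy]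
    linarith [h1, h2.le, h2.ge, h5, hT3, hTpos, h6]
  have hθk : 0 < theta q (k+1) := theta_pos q _ hq2
  linarith [hA, hB, hC, hsum, hTpos, hθk]
end
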